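/- Let F and G be classes of measurable functions on a measurable space (S,𝒮), each of VC-type with constant envelope U > 0 and parameters v ≥ 1, A ≥ 1. Then the class {q·f + (1 − q)·g : f ∈ F, g ∈ G, q ∈ [0,1]} is of VC-type with constant envelope U and parameters 2v + 1, 3A. -/

import Mathlib

/-!
Cover `F` and `G` in `L²(Q)` at radius `εU/3` by at most `(3A/ε)^v` centres each, and cover
`[0,1]` by about `3/ε` points with spacing `2δ`, `δ = ε/(3+ε)`. If `‖f - c₁‖ ≤ εU/3`,
`‖g - c₂‖ ≤ εU/3` and `|q - q'| ≤ δ`, writing the difference of the two combinations as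
`q(f - c₁) + (1-q)(g - c₂) + (q - q')(c₁ - c₂)` and using `‖c₁ - c₂‖ ≤ 2εU/3 + 2U` gives distance
at most `εU/3 + δ(2εU/3 + 2U) = εU`.

Distances are Bochner integrals, which vanish on non-integrable functions. If some `d²` is not
`Q`-integrable, then for every `h` one of `(h - d)², (h - 2d)², (h - 3d)²` is not integrable, since
`(h - d)² - 2(h - 2d)² + (h - 3d)² = 2d²`; so the three centres `d, 2d, 3d` cover everything.
Otherwise every function lies in `L²(Q)` and the argument above goes through.
-/

open MeasureTheory

noncomputable section

/-- A class of real-valued functions is of VC-type with constant envelope `U > 0` and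
parameters `v ≥ 1`, `A ≥ 1` if all its members are bounded by `U` and, for every probability
measure `Q` and every `ε ∈ (0,1)`, the class can be covered by at most `(A/ε)^v` closed
`L₂(Q)`-balls of radius `ε·U`. -/
def IsVCType {S : Type*} [MeasurableSpace S] (F : Set (S → ℝ)) (U v A : ℝ) : Prop :=
  (∀ f ∈ F, ∀ x, |f x| ≤ U) ∧
    ∀ Q : Measure S, IsProbabilityMeasure Q → ∀ ε : ℝ, 0 < ε → ε < 1 →
      ∃ G : Finset (S → ℝ), (G.card : ℝ) ≤ (A / ε) ^ v ∧
        ∀ f ∈ F, ∃ g ∈ G, (∫ x, (f x - g x) ^ 2 ∂Q) ≤ (ε * U) ^ 2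

open Set

theorem abs_convexComb_le {q a b U : ℝ} (hq : q ∈ Icc (0 : ℝ) 1) (ha : |a| ≤ U) (hb : |b| ≤ U) :
    |q * a + (1 - q) * b| ≤ U := by
  obtain ⟨hq0, hq1⟩ := hq
  calc |q * a + (1 - q) * b| ≤ q * |a| + (1 - q) * |b| := by
        refine (abs_add_le _ _).trans_eq ?_
        rw [abs_mul, abs_mul, abs_of_nonneg hq0, abs_of_nonneg (sub_nonneg.2 hq1)]
    _ ≤ q * U + (1 - q) * U := by gcongr
    _ = U := by ring

theorem norm_convexComb_sub_le {E : Type*} [SeminormedAddCommGroup E] [NormedSpace ℝ E]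
    {f g c₁ c₂ : E} {q q' r δ R : ℝ} (hq : q ∈ Icc (0 : ℝ) 1) (hqq' : |q - q'| ≤ δ)
    (hf : ‖f - c₁‖ ≤ r) (hg : ‖g - c₂‖ ≤ r) (hfg : ‖f - g‖ ≤ R) :
    ‖(q • f + (1 - q) • g) - (q' • c₁ + (1 - q') • c₂)‖ ≤ r + δ * (2 * r + R) := by
  obtain ⟨hq0, hq1⟩ := hq
  have hc : ‖c₁ - c₂‖ ≤ 2 * r + R := by
    have h₁ := norm_sub_le_norm_sub_add_norm_sub c₁ f c₂
    have h₂ := norm_sub_le_norm_sub_add_norm_sub f g c₂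
    rw [norm_sub_rev c₁ f] at h₁
    linarith
  have hsplit : (q • f + (1 - q) • g) - (q' • c₁ + (1 - q') • c₂) =
      q • (f - c₁) + (1 - q) • (g - c₂) + (q - q') • (c₁ - c₂) := by module
  rw [hsplit]
  refine (norm_add₃_le ..).trans ?_
  rw [norm_smul, norm_smul, norm_smul, Real.norm_of_nonneg hq0,
    Real.norm_of_nonneg (sub_nonneg.2 hq1), Real.norm_eq_abs]
  have hδ : 0 ≤ δ := (abs_nonneg _).trans hqq'
  calc q * ‖f - c₁‖ + (1 - q) * ‖g - c₂‖ + |q - q'| * ‖c₁ - c₂‖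
      ≤ q * r + (1 - q) * r + δ * (2 * r + R) := by gcongr
    _ = r + δ * (2 * r + R) := by ring

theorem exists_finset_abs_sub_le_of_mem_Icc {δ : ℝ} (hδ : 0 < δ) :
    ∃ T : Finset ℝ, (T.card : ℝ) ≤ 1 / (2 * δ) + 1 ∧
      ∀ q ∈ Icc (0 : ℝ) 1, ∃ t ∈ T, |q - t| ≤ δ := by
  refine ⟨(Finset.range (⌊1 / (2 * δ)⌋₊ + 1)).image fun k : ℕ => (2 * k + 1) * δ, ?_, ?_⟩
  · calc _ ≤ ((⌊1 / (2 * δ)⌋₊ + 1 : ℕ) : ℝ) := by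
          exact_mod_cast (Finset.card_image_le).trans (Finset.card_range _).le
      _ ≤ 1 / (2 * δ) + 1 := by push_cast; gcongr; exact Nat.floor_le (by positivity)
  · rintro q ⟨hq0, hq1⟩
    set k := ⌊q / (2 * δ)⌋₊
    have hk : k < ⌊1 / (2 * δ)⌋₊ + 1 := Nat.lt_succ_of_le (Nat.floor_le_floor (by gcongr))
    refine ⟨(2 * k + 1) * δ, Finset.mem_image_of_mem _ (Finset.mem_range.2 hk), ?_⟩
    have hlo : (k : ℝ) * (2 * δ) ≤ q :=
      (le_div_iff₀ (by positivity)).1 (Nat.floor_le (by positivity))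
    have hhi : q < (k + 1) * (2 * δ) := (div_lt_iff₀ (by positivity)).1 (Nat.lt_floor_add_one _)
    rw [abs_le]
    constructor <;> nlinarith

section

variable {S : Type*}

def convexCombinations (F G : Set (S → ℝ)) : Set (S → ℝ) :=
  {h | ∃ q ∈ Icc (0 : ℝ) 1, ∃ f ∈ F, ∃ g ∈ G, h = fun x => q * f x + (1 - q) * g x}

open Classical in
def convexCombNet (C₁ C₂ : Finset (S → ℝ)) (T : Finset ℝ) : Finset (S → ℝ) :=
  (C₁ ×ˢ C₂ ×ˢ T).image fun p x => p.2.2 * p.1 x + (1 - p.2.2) * p.2.1 x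

theorem card_convexCombNet_le (C₁ C₂ : Finset (S → ℝ)) (T : Finset ℝ) :
    ((convexCombNet C₁ C₂ T).card : ℝ) ≤ C₁.card * C₂.card * T.card := by
  classical
  rw [mul_assoc, convexCombNet]
  exact_mod_cast Finset.card_image_le.trans_eq (by rw [Finset.card_product, Finset.card_product])

section L2

variable [MeasurableSpace S] {Q : Measure S}

def IsL2Net (Q : Measure S) (F : Set (S → ℝ)) (C : Finset (S → ℝ)) (r : ℝ) : Prop :=
  ∀ f ∈ F, ∃ c ∈ C, ∫ x, (f x - c x) ^ 2 ∂Q ≤ r ^ 2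

theorem exists_integral_sq_sub_mul_eq_zero {d : S → ℝ} (hd : ¬Integrable (fun x => d x ^ 2) Q)
    (h : S → ℝ) : ∃ M ∈ ({1, 2, 3} : Finset ℝ), ∫ x, (h x - M * d x) ^ 2 ∂Q = 0 := by
  by_contra! hne
  have hint : ∀ M ∈ ({1, 2, 3} : Finset ℝ), Integrable (fun x => (h x - M * d x) ^ 2) Q :=
    fun M hM => by_contra fun hM' => hne M hM (integral_undef hM')
  refine hd ((((hint 1 (by simp)).sub ((hint 2 (by simp)).const_mul 2)).add
    (hint 3 (by simp))).div_const 2 |>.congr (ae_of_all _ fun x => ?_))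
  simp only [Pi.sub_apply, Pi.add_apply]
  ring

theorem exists_isL2Net_card_le_three_of_not_integrable_sq {d : S → ℝ}
    (hd : ¬Integrable (fun x => d x ^ 2) Q) (H : Set (S → ℝ)) (ρ : ℝ) :
    ∃ C : Finset (S → ℝ), C.card ≤ 3 ∧ IsL2Net Q H C ρ := by
  classical
  refine ⟨({1, 2, 3} : Finset ℝ).image (· • d), Finset.card_image_le.trans Finset.card_le_three,
    fun h _ => ?_⟩
  obtain ⟨M, hM, hzero⟩ := exists_integral_sq_sub_mul_eq_zero hd h
  exact ⟨M • d, Finset.mem_image_of_mem _ hM, hzero.trans_le (sq_nonneg _)⟩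

theorem memLp_two_of_forall_integrable_sq (hsq : ∀ d : S → ℝ, Integrable (fun x => d x ^ 2) Q)
    (u : S → ℝ) : MemLp u 2 Q := by
  have hu : Integrable u Q :=
    (((hsq fun x => u x + 1).sub (hsq fun x => u x - 1)).div_const 4).congr
      (ae_of_all _ fun x => by simp only [Pi.sub_apply]; ring)
  exact (memLp_two_iff_integrable_sq hu.aestronglyMeasurable).2 (hsq u)

theorem MemLp.integral_sq_eq_norm_toLp_sq {u : S → ℝ} (hu : MemLp u 2 Q) :
    ∫ x, u x ^ 2 ∂Q = ‖hu.toLp u‖ ^ 2 := by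
  rw [← real_inner_self_eq_norm_sq, L2.inner_def]
  refine integral_congr_ae ?_
  filter_upwards [hu.coeFn_toLp] with x hx
  simp [hx, sq]

theorem integral_sub_sq_le_sq_iff {u v : S → ℝ} (hu : MemLp u 2 Q) (hv : MemLp v 2 Q) {ρ : ℝ}
    (hρ : 0 ≤ ρ) : ∫ x, (u x - v x) ^ 2 ∂Q ≤ ρ ^ 2 ↔ ‖hu.toLp u - hv.toLp v‖ ≤ ρ := by
  rw [← MemLp.toLp_sub, ← sq_le_sq₀ (norm_nonneg _) hρ, ← MemLp.integral_sq_eq_norm_toLp_sq]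
  rfl

theorem integral_sq_le_of_abs_le [IsProbabilityMeasure Q] {u : S → ℝ} {R : ℝ}
    (h : ∀ x, |u x| ≤ R) : ∫ x, u x ^ 2 ∂Q ≤ R ^ 2 := by
  calc ∫ x, u x ^ 2 ∂Q ≤ ∫ _, R ^ 2 ∂Q :=
        integral_mono_of_nonneg (ae_of_all _ fun x => sq_nonneg _) (integrable_const _)
          (ae_of_all _ fun x => sq_le_sq' (abs_le.1 (h x)).1 (abs_le.1 (h x)).2)
    _ = R ^ 2 := by simp

theorem integral_sq_convexComb_sub_le {f g c₁ c₂ : S → ℝ} (hf : MemLp f 2 Q) (hg : MemLp g 2 Q)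
    (hc₁ : MemLp c₁ 2 Q) (hc₂ : MemLp c₂ 2 Q) {q q' r δ R : ℝ} (hq : q ∈ Icc (0 : ℝ) 1)
    (hqq' : |q - q'| ≤ δ) (hr : 0 ≤ r) (hR : 0 ≤ R)
    (hfc₁ : ∫ x, (f x - c₁ x) ^ 2 ∂Q ≤ r ^ 2) (hgc₂ : ∫ x, (g x - c₂ x) ^ 2 ∂Q ≤ r ^ 2)
    (hfg : ∫ x, (f x - g x) ^ 2 ∂Q ≤ R ^ 2) :
    ∫ x, (q * f x + (1 - q) * g x - (q' * c₁ x + (1 - q') * c₂ x)) ^ 2 ∂Q ≤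
      (r + δ * (2 * r + R)) ^ 2 := by
  have hδ : 0 ≤ δ := (abs_nonneg _).trans hqq'
  have hcomb : ∀ (t : ℝ) {u v : S → ℝ} (hu : MemLp u 2 Q) (hv : MemLp v 2 Q),
      ∃ h : MemLp (fun x => t * u x + (1 - t) * v x) 2 Q,
        h.toLp _ = t • hu.toLp u + (1 - t) • hv.toLp v := fun t _ _ hu hv =>
    ⟨(hu.const_smul t).add (hv.const_smul (1 - t)), by
      rw [← MemLp.toLp_const_smul, ← MemLp.toLp_const_smul, ← MemLp.toLp_add]; rfl⟩
  obtain ⟨hh, hh_eq⟩ := hcomb q hf hg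
  obtain ⟨hw, hw_eq⟩ := hcomb q' hc₁ hc₂
  rw [integral_sub_sq_le_sq_iff hh hw (by positivity), hh_eq, hw_eq]
  exact norm_convexComb_sub_le hq hqq' ((integral_sub_sq_le_sq_iff hf hc₁ hr).1 hfc₁)
    ((integral_sub_sq_le_sq_iff hg hc₂ hr).1 hgc₂) ((integral_sub_sq_le_sq_iff hf hg hR).1 hfg)

variable [IsProbabilityMeasure Q] (hsq : ∀ d : S → ℝ, Integrable (fun x => d x ^ 2) Q)
  {F G : Set (S → ℝ)} {U : ℝ} (hU : 0 ≤ U) (hFU : ∀ f ∈ F, ∀ x, |f x| ≤ U)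
  (hGU : ∀ g ∈ G, ∀ x, |g x| ≤ U)
include hsq hU hFU hGU

theorem IsL2Net.convexCombinations {C₁ C₂ : Finset (S → ℝ)} {T : Finset ℝ} {r δ : ℝ}
    (hC₁ : IsL2Net Q F C₁ r) (hC₂ : IsL2Net Q G C₂ r) (hr : 0 ≤ r)
    (hT : ∀ q ∈ Icc (0 : ℝ) 1, ∃ t ∈ T, |q - t| ≤ δ) :
    IsL2Net Q (convexCombinations F G) (convexCombNet C₁ C₂ T) (r + δ * (2 * r + 2 * U)) := by
  rintro _ ⟨q, hq, f, hf, g, hg, rfl⟩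
  obtain ⟨c₁, hc₁, hfc₁⟩ := hC₁ f hf
  obtain ⟨c₂, hc₂, hgc₂⟩ := hC₂ g hg
  obtain ⟨t, ht, hqt⟩ := hT q hq
  have hfg : ∀ x, |f x - g x| ≤ 2 * U := fun x =>
    (abs_sub _ _).trans (by linarith [hFU f hf x, hGU g hg x])
  have hL2 := memLp_two_of_forall_integrable_sq hsq
  refine ⟨fun x => t * c₁ x + (1 - t) * c₂ x, ?_, ?_⟩
  · classical
    rw [convexCombNet, Finset.mem_image]
    exact ⟨(c₁, c₂, t), Finset.mem_product.2 ⟨hc₁, Finset.mem_product.2 ⟨hc₂, ht⟩⟩, rfl⟩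
  exact integral_sq_convexComb_sub_le (hL2 f) (hL2 g) (hL2 c₁) (hL2 c₂) hq hqt hr (by positivity)
    hfc₁ hgc₂ (integral_sq_le_of_abs_le hfg)

theorem exists_isL2Net_convexCombinations {ε : ℝ} (hε : 0 < ε) (hε1 : ε ≤ 1)
    {C₁ C₂ : Finset (S → ℝ)} (hC₁ : IsL2Net Q F C₁ (ε / 3 * U))
    (hC₂ : IsL2Net Q G C₂ (ε / 3 * U)) :
    ∃ C : Finset (S → ℝ), (C.card : ℝ) ≤ C₁.card * C₂.card * (3 / ε) ∧
      IsL2Net Q (convexCombinations F G) C (ε * U) := by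
  obtain ⟨T, hTcard, hT⟩ := exists_finset_abs_sub_le_of_mem_Icc (δ := ε / (3 + ε)) (by positivity)
  refine ⟨convexCombNet C₁ C₂ T, (card_convexCombNet_le C₁ C₂ T).trans ?_, ?_⟩
  · gcongr
    refine hTcard.trans ?_
    rw [div_add_one (by positivity), div_le_div_iff₀ (by positivity) hε]
    field_simp
    nlinarith
  · have hr : ε / 3 * U + ε / (3 + ε) * (2 * (ε / 3 * U) + 2 * U) = ε * U := by
      field_simp
      ring
    rw [← hr]
    exact IsL2Net.convexCombinations hsq hU hFU hGU hC₁ hC₂ (by positivity) hT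

end L2

end

theorem stmt_15_general {S : Type*} [MeasurableSpace S] (F G : Set (S → ℝ)) (U v A : ℝ)
    (hU : 0 < U) (hv : 1 ≤ v) (hA : 1 ≤ A)
    (hVCF : IsVCType F U v A) (hVCG : IsVCType G U v A) :
    IsVCType
      {h | ∃ q ∈ Set.Icc (0 : ℝ) 1, ∃ f ∈ F, ∃ g ∈ G,
        h = fun x => q * f x + (1 - q) * g x}
      U (2 * v + 1) (3 * A) := by
  obtain ⟨hFU, hFnet⟩ := hVCF
  obtain ⟨hGU, hGnet⟩ := hVCG
  refine ⟨?_, fun Q hQ ε hε hε1 => ?_⟩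
  · rintro _ ⟨q, hq, f, hf, g, hg, rfl⟩ x
    exact abs_convexComb_le hq (hFU f hf x) (hGU g hg x)
  by_cases hsq : ∀ d : S → ℝ, Integrable (fun x => d x ^ 2) Q
  · obtain ⟨C₁, hC₁card, hC₁⟩ := hFnet Q hQ (ε / 3) (by positivity) (by linarith)
    obtain ⟨C₂, hC₂card, hC₂⟩ := hGnet Q hQ (ε / 3) (by positivity) (by linarith)
    obtain ⟨C, hCcard, hC⟩ :=
      exists_isL2Net_convexCombinations hsq hU.le hFU hGU hε hε1.le hC₁ hC₂
    refine ⟨C, hCcard.trans ?_, hC⟩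
    rw [div_div_eq_mul_div, mul_comm A] at hC₁card hC₂card
    calc _ ≤ (3 * A / ε) ^ v * (3 * A / ε) ^ v * (3 * A / ε) := by gcongr; linarith
      _ = (3 * A / ε) ^ (2 * v + 1) := by
        rw [Real.rpow_add_one (by positivity), two_mul, Real.rpow_add (by positivity)]
  · obtain ⟨d, hd⟩ := not_forall.1 hsq
    obtain ⟨C, hCcard, hC⟩ := exists_isL2Net_card_le_three_of_not_integrable_sq hd
      (convexCombinations F G) (ε * U)
    have hX : 3 ≤ 3 * A / ε := by rw [le_div_iff₀ hε]; linarith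
    refine ⟨C, ?_, hC⟩
    calc (C.card : ℝ) ≤ 3 := by exact_mod_cast hCcard
      _ ≤ 3 * A / ε := hX
      _ ≤ (3 * A / ε) ^ (2 * v + 1) := Real.self_le_rpow_of_one_le (by linarith) (by linarith)

/-- VC preservation: convex combinations of two VC-type classes. -/
theorem stmt_15 {S : Type*} [MeasurableSpace S] (F G : Set (S → ℝ)) (U v A : ℝ)
    (hU : 0 < U) (hv : 1 ≤ v) (hA : 1 ≤ A)
    (hmeasF : ∀ f ∈ F, Measurable f) (hmeasG : ∀ g ∈ G, Measurable g)
    (hVCF : IsVCType F U v A) (hVCG : IsVCType G U v A) :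
    IsVCType
      {h | ∃ q ∈ Set.Icc (0 : ℝ) 1, ∃ f ∈ F, ∃ g ∈ G,
        h = fun x => q * f x + (1 - q) * g x}
      U (2 * v + 1) (3 * A) :=
  stmt_15_general F G U v A hU hv hA hVCF hVCG

end
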